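/- Let G be a graph of bounded degree and suppose there exist C₁, C₂ > 0 and 1 > α > β > 0 with C₁/n^α ≤ Λ(n) ≤ C₂/n^β for all n ≥ 1, and suppose G has partial self-isomorphisms. Then there exists A > 0 such that for all n ≥ 2, Sep(n) ≥ A·n^γ / log(n), where γ = β(1−α)/α. -/

import Mathlib

open Set Filter

namespace SepProfile

variable {V : Type*}

/-- Edge boundary of a vertex set: pairs (a,b) with a ∈ A, b ∉ A, a ~ b. -/
def ebd (G : SimpleGraph V) (A : Set V) : Set (V × V) :=
  {p | G.Adj p.1 p.2 ∧ p.1 ∈ A ∧ p.2 ∉ A}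

/-- Isoperimetric ratio |∂A|/|A|. -/
noncomputable def ratio (G : SimpleGraph V) (A : Set V) : ℝ :=
  ((ebd G A).ncard : ℝ) / (A.ncard : ℝ)

/-- Isoperimetric profile Λ(n). -/
noncomputable def isop (G : SimpleGraph V) (n : ℕ) : ℝ :=
  sInf {x | ∃ A : Set V, A.Finite ∧ A.Nonempty ∧ A.ncard ≤ n ∧ x = ratio G A}

/-- Boundary of A within F (edges of the induced subgraph on F leaving A). -/
def inbd (G : SimpleGraph V) (F A : Set V) : Set (V × V) :=
  {p | G.Adj p.1 p.2 ∧ p.1 ∈ A ∧ p.2 ∈ F \ A}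

/-- Cheeger constant of the subgraph induced on F. -/
noncomputable def cheeger (G : SimpleGraph V) (F : Set V) : ℝ :=
  sInf {x | ∃ A : Set V, A ⊆ F ∧ A.Nonempty ∧ 2 * A.ncard ≤ F.ncard ∧
    x = ((inbd G F A).ncard : ℝ) / (A.ncard : ℝ)}

/-- Separation profile Sep(n) = sup_{|F| ≤ n} |F|·h(F). -/
noncomputable def sep (G : SimpleGraph V) (n : ℕ) : ℝ :=
  sSup {x | ∃ F : Set V, F.Finite ∧ F.ncard ≤ n ∧ x = (F.ncard : ℝ) * cheeger G F}

/-- A finite set is optimal if it realizes the isoperimetric profile. -/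
def Optimal (G : SimpleGraph V) (F : Set V) : Prop :=
  F.Finite ∧ F.Nonempty ∧ ratio G F = isop G F.ncard

/-- An integer is optimal if some optimal set has that cardinality. -/
def OptimalInt (G : SimpleGraph V) (n : ℕ) : Prop :=
  ∃ F : Set V, Optimal G F ∧ F.ncard = n

/-- Ball of radius n around v for the graph metric. -/
def ball (G : SimpleGraph V) (v : V) (n : ℕ) : Set V :=
  {u | G.Reachable v u ∧ G.dist v u ≤ n}

/-- All degrees bounded by D. -/
def DegLE (G : SimpleGraph V) (D : ℕ) : Prop :=
  ∀ v, (G.neighborSet v).ncard ≤ D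

/-- Amenability: the isoperimetric profile tends to 0. -/
def Amenable (G : SimpleGraph V) : Prop :=
  Tendsto (fun n => isop G n) atTop (nhds 0)

/-- F together with its outer vertex neighbourhood. -/
def nbh (G : SimpleGraph V) (F : Set V) : Set V :=
  F ∪ {b | ∃ a ∈ F, G.Adj a b}

/-- Partial self-isomorphisms: every finite F has a disjoint isomorphic copy
(together with its boundary neighbourhood). -/
def HasPSI (G : SimpleGraph V) : Prop :=
  ∀ F : Set V, F.Finite →
    ∃ F' : Set V, F'.Finite ∧ Disjoint F F' ∧
      ∃ e : G.induce (nbh G F) ≃g G.induce (nbh G F'),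
        ∀ x : nbh G F, (x : V) ∈ F ↔ ((e x : V) ∈ F')

/-- δ-geometric decay function p_f^δ(x) = inf {y > 0 : f(y) ≤ δ·f(x)}. -/
noncomputable def gdecay (f : ℝ → ℝ) (δ x : ℝ) : ℝ :=
  sInf {y | 0 < y ∧ f y ≤ δ * f x}

end SepProfile

open SepProfile Real

/-!
Partial self-isomorphisms give an optimal set `F` (one realising `Λ(|F|)`) of every size up to a
factor two: a disjoint isomorphic copy doubles `F` without increasing `|∂F| / |F|`. Take such an
`F` of size `M ≍ k` and cut it recursively along cuts of Cheeger ratio `< t`. If no piece of size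
`> n` had Cheeger constant `≥ t`, the pieces would end with size `≤ n`, so their boundaries would
total at least `Λ(n) M ≥ C₁ n^(-α) M`, whereas the cuts add at most `2 t M log₂ M` edges to
`|∂F| ≤ C₂ M^(1-β)`. For `n ≍ M^(β/α)` and `t ≍ Λ(n) / log M` this is impossible, so some piece
`F'` with `|F'| > n` has `h(F') ≥ t`, and `Sep(k) ≥ |F'| h(F') ≳ n^(1-α) / log M ≍ k^γ / log k`.
-/

namespace SepProfile

variable {V : Type*} {G : SimpleGraph V}

section Isoperimetry

variable (G) in
lemma ratio_nonneg (A : Set V) : 0 ≤ ratio G A := by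
  unfold ratio; positivity

lemma ratio_mul_ncard {A : Set V} (hA : A.Finite) (hne : A.Nonempty) :
    ratio G A * A.ncard = (ebd G A).ncard :=
  div_mul_cancel₀ _ (Nat.cast_ne_zero.2 ((ncard_pos hA).2 hne).ne')

lemma ebd_finite_of_ratio_pos {A : Set V} (h : 0 < ratio G A) : (ebd G A).Finite := by
  by_contra hinf
  simp [ratio, Set.Infinite.ncard hinf] at h

lemma isop_le_ratio {A : Set V} {n : ℕ} (hA : A.Finite) (hne : A.Nonempty) (hcard : A.ncard ≤ n) :
    isop G n ≤ ratio G A :=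
  csInf_le ⟨0, by rintro _ ⟨B, -, -, -, rfl⟩; exact ratio_nonneg G B⟩ ⟨A, hA, hne, hcard, rfl⟩

lemma isop_le_isop {m n : ℕ} (hmn : m ≤ n) {A : Set V} (hA : A.Finite) (hne : A.Nonempty)
    (hcard : A.ncard ≤ m) : isop G n ≤ isop G m :=
  le_csInf ⟨_, A, hA, hne, hcard, rfl⟩ <| by
    rintro _ ⟨B, hB, hBne, hBcard, rfl⟩
    exact isop_le_ratio hB hBne (hBcard.trans hmn)

lemma csInf_mem_of_finite_inter_Iic {α : Type*} [ConditionallyCompleteLinearOrder α]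
    {S : Set α} {b : α} (hb : b ∈ S) (hS : BddBelow S)
    (hfin : (S ∩ Iic b).Finite) : sInf S ∈ S := by
  have hT : (S ∩ Iic b).Nonempty := ⟨b, hb, mem_Iic.2 le_rfl⟩
  have heq : sInf S = sInf (S ∩ Iic b) := by
    refine le_antisymm (csInf_le_csInf hS hT inter_subset_left) (le_csInf ⟨b, hb⟩ fun x hx => ?_)
    rcases le_or_gt x b with h | h
    · exact csInf_le hfin.bddBelow ⟨hx, h⟩
    · exact (csInf_le hfin.bddBelow ⟨hb, mem_Iic.2 le_rfl⟩).trans h.le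
  exact heq ▸ (hT.csInf_mem hfin).1

/-- Ratios below `b` are fractions `p / q` with `p ≤ b n` and `q ≤ n`, so only finitely many of
them compete for the infimum. -/
lemma exists_ratio_eq_isop {n : ℕ} (h : 0 < isop G n) :
    ∃ A : Set V, A.Finite ∧ A.Nonempty ∧ A.ncard ≤ n ∧ ratio G A = isop G n := by
  set S := {x | ∃ A : Set V, A.Finite ∧ A.Nonempty ∧ A.ncard ≤ n ∧ x = ratio G A}
  obtain ⟨b, hb⟩ : S.Nonempty := by
    by_contra hS
    exact h.ne' (show sInf S = 0 by rw [not_nonempty_iff_eq_empty.1 hS, Real.sInf_empty])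
  have hfin : (S ∩ Iic b).Finite := by
    refine (((finite_Iic ⌈b * n⌉₊).prod (finite_Iic n)).image
      fun p : ℕ × ℕ => (p.1 : ℝ) / p.2).subset ?_
    rintro _ ⟨⟨A, hA, hne, hcard, rfl⟩, hAb⟩
    refine ⟨((ebd G A).ncard, A.ncard), ⟨?_, hcard⟩, rfl⟩
    have hb0 : 0 ≤ b := (ratio_nonneg G A).trans hAb
    have hAn : (A.ncard : ℝ) ≤ n := by exact_mod_cast hcard
    rw [mem_Iic, ← Nat.cast_le (α := ℝ), ← ratio_mul_ncard hA hne]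
    calc ratio G A * A.ncard ≤ b * n := mul_le_mul hAb hAn (by positivity) hb0
      _ ≤ _ := Nat.le_ceil _
  obtain ⟨A, hA, hne, hcard, hx⟩ :=
    csInf_mem_of_finite_inter_Iic hb ⟨0, by rintro _ ⟨B, -, -, -, rfl⟩; exact ratio_nonneg G B⟩ hfin
  exact ⟨A, hA, hne, hcard, hx.symm⟩

lemma exists_optimal_ratio_eq_isop {n : ℕ} (h : 0 < isop G n) :
    ∃ F : Set V, Optimal G F ∧ F.ncard ≤ n ∧ ratio G F = isop G n := by
  obtain ⟨A, hA, hne, hcard, hr⟩ := exists_ratio_eq_isop h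
  refine ⟨A, ⟨hA, hne, le_antisymm ?_ (isop_le_ratio hA hne le_rfl)⟩, hcard, hr⟩
  exact hr ▸ isop_le_isop hcard hA hne le_rfl

lemma Optimal.ncard_pos {F : Set V} (hF : Optimal G F) : 0 < F.ncard :=
  (Set.ncard_pos hF.1).2 hF.2.1

lemma exists_adj_of_isop_pos {n : ℕ} (h : 0 < isop G n) : ∃ v w, G.Adj v w := by
  obtain ⟨A, -, -, -, hA⟩ := exists_ratio_eq_isop h
  obtain ⟨p, hp, -, -⟩ := nonempty_of_ncard_ne_zero (s := ebd G A) fun h0 => by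
    simp [← hA, ratio, h0] at h
  exact ⟨p.1, p.2, hp⟩

end Isoperimetry

section PartialSelfIsomorphism

lemma subset_nbh (F : Set V) : F ⊆ nbh G F := subset_union_left

lemma mem_nbh_of_adj {F : Set V} {a b : V} (ha : a ∈ F) (hab : G.Adj a b) : b ∈ nbh G F :=
  Or.inr ⟨a, ha, hab⟩

lemma ebd_union_subset (A B : Set V) : ebd G (A ∪ B) ⊆ ebd G A ∪ ebd G B := by
  rintro p ⟨hadj, hA | hB, hp⟩
  · exact Or.inl ⟨hadj, hA, fun h => hp (Or.inl h)⟩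
  · exact Or.inr ⟨hadj, hB, fun h => hp (Or.inr h)⟩

variable {F F' : Set V}

lemma ncard_eq_of_iso_nbh (e : G.induce (nbh G F) ≃g G.induce (nbh G F'))
    (he : ∀ x : nbh G F, (x : V) ∈ F ↔ (e x : V) ∈ F') : F.ncard = F'.ncard := by
  refine ncard_congr (fun a ha => (e ⟨a, subset_nbh F ha⟩ : V)) (fun a ha => (he _).1 ha)
    (fun a b _ _ hab => by simpa using e.injective (Subtype.ext hab)) fun b hb => ?_
  exact ⟨e.symm ⟨b, subset_nbh F' hb⟩, (he _).2 (by simpa using hb), by simp⟩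

lemma mem_ebd_iff_of_iso_nbh (e : G.induce (nbh G F) ≃g G.induce (nbh G F'))
    (he : ∀ x : nbh G F, (x : V) ∈ F ↔ (e x : V) ∈ F') (x y : nbh G F) :
    ((x : V), (y : V)) ∈ ebd G F ↔ ((e x : V), (e y : V)) ∈ ebd G F' := by
  have hadj : G.Adj (e x) (e y) ↔ G.Adj x y := e.map_adj_iff
  simp only [ebd, mem_ofPred_eq, hadj, he]

lemma ncard_ebd_eq_of_iso_nbh (e : G.induce (nbh G F) ≃g G.induce (nbh G F'))
    (he : ∀ x : nbh G F, (x : V) ∈ F ↔ (e x : V) ∈ F') :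
    (ebd G F).ncard = (ebd G F').ncard := by
  refine ncard_congr
    (fun p hp => ((e ⟨p.1, subset_nbh F hp.2.1⟩ : V), (e ⟨p.2, mem_nbh_of_adj hp.2.1 hp.1⟩ : V)))
    (fun p hp => (mem_ebd_iff_of_iso_nbh e he _ _).1 hp)
    (fun p q _ _ hpq => ?_) fun q hq => ?_
  · simp only [Prod.mk.injEq] at hpq
    exact Prod.ext (by simpa using e.injective (Subtype.ext hpq.1))
      (by simpa using e.injective (Subtype.ext hpq.2))
  · set x := e.symm ⟨q.1, subset_nbh F' hq.2.1⟩
    set y := e.symm ⟨q.2, mem_nbh_of_adj hq.2.1 hq.1⟩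
    have hxy : ((x : V), (y : V)) ∈ ebd G F := by
      rw [mem_ebd_iff_of_iso_nbh e he]; simpa [x, y] using hq
    exact ⟨_, hxy, by simp [x, y]⟩

lemma exists_double_ratio_le (hPSI : HasPSI G) (hF : F.Finite) (hne : F.Nonempty)
    (hpos : 0 < ratio G F) :
    ∃ F₂ : Set V, F₂.Finite ∧ F₂.Nonempty ∧ F₂.ncard = 2 * F.ncard ∧ ratio G F₂ ≤ ratio G F := by
  obtain ⟨F', hF', hdisj, e, he⟩ := hPSI F hF
  have hcard : (F ∪ F').ncard = 2 * F.ncard := by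
    rw [ncard_union_eq hdisj hF hF', ← ncard_eq_of_iso_nbh e he, two_mul]
  have hbd := ebd_finite_of_ratio_pos hpos
  have hbd_eq := ncard_ebd_eq_of_iso_nbh e he
  have hbd' : (ebd G F').Finite :=
    finite_of_ncard_pos (hbd_eq ▸ (Set.ncard_pos hbd).2 (nonempty_of_ncard_ne_zero
      fun h0 => by simp [ratio, h0] at hpos))
  have hunion : ((ebd G (F ∪ F')).ncard : ℝ) ≤ 2 * (ebd G F).ncard := by
    have := (ncard_le_ncard (ebd_union_subset F F') (hbd.union hbd')).trans (ncard_union_le _ _)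
    rw [← hbd_eq] at this
    exact_mod_cast this.trans_eq (two_mul _).symm
  refine ⟨F ∪ F', hF.union hF', hne.mono subset_union_left, hcard, ?_⟩
  calc ratio G (F ∪ F') ≤ 2 * (ebd G F).ncard / (2 * F.ncard : ℕ) := by
        rw [ratio, hcard]; gcongr
    _ = ratio G F := by push_cast; exact mul_div_mul_left _ _ two_ne_zero

end PartialSelfIsomorphism

/-- Either the optimal set realising `Λ(2|F|)` is larger than `F`, or `Λ(2|F|) = Λ(|F|)` and the
doubled set is optimal. -/
lemma exists_optimal_ncard_mem_Ioc (hPSI : HasPSI G) {F : Set V} (hF : Optimal G F)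
    (hpos : 0 < isop G (2 * F.ncard)) :
    ∃ F₂ : Set V, Optimal G F₂ ∧ F.ncard < F₂.ncard ∧ F₂.ncard ≤ 2 * F.ncard := by
  obtain ⟨B, hB, hBcard, hBratio⟩ := exists_optimal_ratio_eq_isop hpos
  rcases lt_or_ge F.ncard B.ncard with h | h
  · exact ⟨B, hB, h, hBcard⟩
  have hle : isop G (2 * F.ncard) ≤ isop G F.ncard := isop_le_isop (by omega) hF.1 hF.2.1 le_rfl
  have hge : isop G F.ncard ≤ isop G (2 * F.ncard) :=
    calc isop G F.ncard ≤ isop G B.ncard := isop_le_isop h hB.1 hB.2.1 le_rfl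
      _ = isop G (2 * F.ncard) := hB.2.2.symm.trans hBratio
  obtain ⟨F₂, hF₂, hne₂, hcard₂, hratio₂⟩ :=
    exists_double_ratio_le hPSI hF.1 hF.2.1 (hF.2.2 ▸ hpos.trans_le hle)
  refine ⟨F₂, ⟨hF₂, hne₂, le_antisymm ?_ (isop_le_ratio hF₂ hne₂ le_rfl)⟩, ?_, hcard₂.le⟩
  · rw [hcard₂, le_antisymm hle hge, ← hF.2.2]; exact hratio₂
  · have := hF.ncard_pos; omega

lemma exists_optimal_ncard_mem_Ico (hPSI : HasPSI G) (hpos : ∀ m, 1 ≤ m → 0 < isop G m)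
    {s : ℕ} (hs : 1 ≤ s) : ∃ F : Set V, Optimal G F ∧ s ≤ F.ncard ∧ F.ncard < 2 * s := by
  induction s, hs using Nat.le_induction with
  | base =>
    obtain ⟨F, hF, hcard, -⟩ := exists_optimal_ratio_eq_isop (G := G) (hpos 1 le_rfl)
    exact ⟨F, hF, hF.ncard_pos, by omega⟩
  | succ s hs ih =>
    obtain ⟨F, hF, hsF, hFs⟩ := ih
    rcases hsF.lt_or_eq with h | h
    · exact ⟨F, hF, h, by omega⟩
    obtain ⟨F₂, hF₂, hlt, hle⟩ := exists_optimal_ncard_mem_Ioc hPSI hF (hpos _ (by omega))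
    exact ⟨F₂, hF₂, by omega, by omega⟩

section Separation

lemma inbd_subset_prod (F A : Set V) : inbd G F A ⊆ A ×ˢ F := fun _ hp => ⟨hp.2.1, hp.2.2.1⟩

lemma inbd_finite {F A : Set V} (hA : A.Finite) (hF : F.Finite) : (inbd G F A).Finite :=
  (hA.prod hF).subset (inbd_subset_prod F A)

variable (G) in
lemma cheeger_nonneg (F : Set V) : 0 ≤ cheeger G F :=
  Real.sInf_nonneg (by rintro _ ⟨A, -, -, -, rfl⟩; positivity)

lemma cheeger_le_ncard {F : Set V} (hF : F.Finite) : cheeger G F ≤ F.ncard := by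
  unfold cheeger
  rcases eq_empty_or_nonempty {x | ∃ A : Set V, A ⊆ F ∧ A.Nonempty ∧ 2 * A.ncard ≤ F.ncard ∧
      x = ((inbd G F A).ncard : ℝ) / (A.ncard : ℝ)} with h | ⟨x, hx⟩
  · rw [h, Real.sInf_empty]; positivity
  refine (csInf_le ⟨0, by rintro _ ⟨A, -, -, -, rfl⟩; positivity⟩ hx).trans ?_
  obtain ⟨A, hAF, hne, -, rfl⟩ := hx
  have hA := (Set.ncard_pos (hF.subset hAF)).2 hne
  rw [div_le_iff₀ (by exact_mod_cast hA), mul_comm]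
  exact_mod_cast (ncard_le_ncard (inbd_subset_prod F A) ((hF.subset hAF).prod hF)).trans_eq
    ncard_prod

lemma sep_bddAbove (n : ℕ) :
    BddAbove {x | ∃ F : Set V, F.Finite ∧ F.ncard ≤ n ∧ x = (F.ncard : ℝ) * cheeger G F} := by
  refine ⟨(n : ℝ) * n, ?_⟩
  rintro _ ⟨F, hF, hcard, rfl⟩
  have hn : (F.ncard : ℝ) ≤ n := by exact_mod_cast hcard
  exact mul_le_mul hn ((cheeger_le_ncard hF).trans hn) (cheeger_nonneg G F) (by positivity)

lemma le_sep {F : Set V} {n : ℕ} (hF : F.Finite) (hcard : F.ncard ≤ n) :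
    (F.ncard : ℝ) * cheeger G F ≤ sep G n :=
  le_csSup (sep_bddAbove n) ⟨F, hF, hcard, rfl⟩

lemma sep_mono {m n : ℕ} (hmn : m ≤ n) : sep G m ≤ sep G n :=
  csSup_le_csSup (sep_bddAbove n) ⟨_, ∅, finite_empty, by simp, rfl⟩ <| by
    rintro _ ⟨F, hF, hcard, rfl⟩
    exact ⟨F, hF, hcard.trans hmn, rfl⟩

lemma one_le_cheeger_pair {v w : V} (hadj : G.Adj v w) : 1 ≤ cheeger G {v, w} := by
  have hcard : ({v, w} : Set V).ncard = 2 := ncard_pair hadj.ne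
  refine le_csInf ⟨_, {v}, by simp, singleton_nonempty v, by simp [hcard], rfl⟩ ?_
  rintro _ ⟨A, hAF, hAne, hA2, rfl⟩
  obtain ⟨u, rfl⟩ : ∃ u, A = {u} :=
    ncard_eq_one.1 (by have := (Set.ncard_pos ((toFinite _).subset hAF)).2 hAne; omega)
  obtain ⟨u', hu'⟩ : ∃ u', (u, u') ∈ inbd G {v, w} {u} := by
    rcases hAF rfl with rfl | rfl
    · exact ⟨w, hadj, rfl, by simp, by simpa using hadj.ne.symm⟩
    · exact ⟨v, hadj.symm, rfl, by simp, by simpa using hadj.ne⟩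
  rw [ncard_singleton, Nat.cast_one, div_one, Nat.one_le_cast]
  exact (Set.ncard_pos (inbd_finite (toFinite _) (toFinite _))).2 ⟨_, hu'⟩

lemma two_le_sep {v w : V} (hadj : G.Adj v w) {n : ℕ} (hn : 2 ≤ n) : 2 ≤ sep G n := by
  have h := le_sep (G := G) (toFinite {v, w}) ((ncard_pair hadj.ne).trans_le hn)
  rw [ncard_pair hadj.ne] at h
  push_cast at h
  linarith [one_le_cheeger_pair hadj]

end Separation

section Bisection

lemma ebd_subset_of_subset {F A : Set V} (hA : A ⊆ F) :
    ebd G A ⊆ (ebd G F ∩ {p | p.1 ∈ A}) ∪ inbd G F A := by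
  rintro p ⟨hadj, h1, h2⟩
  by_cases hF : p.2 ∈ F
  · exact Or.inr ⟨hadj, h1, hF, h2⟩
  · exact Or.inl ⟨⟨hadj, hA h1, hF⟩, h1⟩

lemma ebd_sdiff_subset {F A : Set V} :
    ebd G (F \ A) ⊆ (ebd G F \ {p | p.1 ∈ A}) ∪ Prod.swap '' inbd G F A := by
  rintro p ⟨hadj, ⟨h1F, h1A⟩, h2⟩
  by_cases hF : p.2 ∈ F
  · have h2A : p.2 ∈ A := by by_contra h; exact h2 ⟨hF, h⟩
    exact Or.inr ⟨p.swap, ⟨hadj.symm, h2A, h1F, h1A⟩, rfl⟩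
  · exact Or.inl ⟨⟨hadj, h1F, hF⟩, h1A⟩

/-- Each cut edge between `A` and `F \ A` is counted once from each side. -/
lemma ncard_ebd_add_ncard_ebd_sdiff_le {F A : Set V} (hF : F.Finite) (hA : A ⊆ F)
    (hbd : (ebd G F).Finite) :
    (ebd G A).ncard + (ebd G (F \ A)).ncard ≤ (ebd G F).ncard + 2 * (inbd G F A).ncard := by
  have hI := inbd_finite (G := G) (hF.subset hA) hF
  have h1 := ncard_le_ncard (ebd_subset_of_subset hA) ((hbd.inter_of_left _).union hI)
  have h2 := ncard_le_ncard (ebd_sdiff_subset (G := G) (F := F) (A := A))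
    (hbd.sdiff.union (hI.image _))
  have h3 := ncard_union_le (ebd G F ∩ {p | p.1 ∈ A}) (inbd G F A)
  have h4 := ncard_union_le (ebd G F \ {p | p.1 ∈ A}) (Prod.swap '' inbd G F A)
  have h5 := ncard_inter_add_ncard_sdiff_eq_ncard (ebd G F) {p | p.1 ∈ A} hbd
  rw [ncard_image_of_injective _ Prod.swap_injective] at h4
  omega

lemma exists_cut_of_cheeger_lt {F : Set V} {t : ℝ} (h2 : 2 ≤ F.ncard) (ht : cheeger G F < t) :
    ∃ A ⊆ F, A.Nonempty ∧ 2 * A.ncard ≤ F.ncard ∧ ((inbd G F A).ncard : ℝ) < t * A.ncard := by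
  have hF : F.Finite := finite_of_ncard_pos (by omega)
  obtain ⟨a, ha⟩ := nonempty_of_ncard_ne_zero (s := F) (by omega)
  obtain ⟨_, ⟨A, hAF, hne, hA2, rfl⟩, hlt⟩ := exists_lt_of_csInf_lt
    (by exact ⟨_, {a}, singleton_subset_iff.2 ha, singleton_nonempty a, by simpa using h2, rfl⟩) ht
  have hA : (0 : ℝ) < A.ncard := by exact_mod_cast (Set.ncard_pos (hF.subset hAF)).2 hne
  exact ⟨A, hAF, hne, hA2, (div_lt_iff₀ hA).1 hlt⟩

lemma clog_two_two_mul {a : ℕ} (ha : 1 ≤ a) : Nat.clog 2 (2 * a) = Nat.clog 2 a + 1 := by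
  rw [Nat.clog_of_two_le one_lt_two (by omega)]
  congr 2
  omega

lemma mul_clog_two_add_le {a b : ℕ} (ha : 1 ≤ a) (hab : a ≤ b) :
    a * (Nat.clog 2 a + 1) + b * Nat.clog 2 b ≤ (a + b) * Nat.clog 2 (a + b) := by
  have h1 : Nat.clog 2 a + 1 ≤ Nat.clog 2 (a + b) :=
    clog_two_two_mul ha ▸ Nat.clog_mono_right 2 (by omega)
  have h2 : Nat.clog 2 b ≤ Nat.clog 2 (a + b) := Nat.clog_mono_right 2 (by omega)
  calc a * (Nat.clog 2 a + 1) + b * Nat.clog 2 b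
      ≤ a * Nat.clog 2 (a + b) + b * Nat.clog 2 (a + b) := by gcongr
    _ = (a + b) * Nat.clog 2 (a + b) := (add_mul _ _ _).symm

/-- Cut `F` along cuts of Cheeger ratio `< t` until the pieces have size `≤ n`, where `lam` bounds
their boundary from below; the cuts cost at most `2 t |F| log₂ |F|` edges, since each vertex lies on
the smaller side of a cut at most `log₂ |F|` times. -/
lemma exists_subset_le_cheeger_or_le_ebd_add {t lam : ℝ} {n : ℕ} (hn : 1 ≤ n) (ht : 0 ≤ t)
    (hlow : ∀ P : Set V, P.Finite → P.Nonempty → P.ncard ≤ n → lam * P.ncard ≤ (ebd G P).ncard)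
    {F : Set V} (hF : F.Finite) (hne : F.Nonempty) (hbd : (ebd G F).Finite) :
    (∃ F' ⊆ F, n < F'.ncard ∧ t ≤ cheeger G F') ∨
      lam * F.ncard ≤ (ebd G F).ncard + 2 * t * F.ncard * Nat.clog 2 F.ncard := by
  induction hm : F.ncard using Nat.strong_induction_on generalizing F with
  | _ m ih =>
  subst hm
  rcases le_or_gt F.ncard n with hFn | hFn
  · exact Or.inr ((hlow F hF hne hFn).trans (le_add_of_nonneg_right (by positivity)))
  rcases le_or_gt t (cheeger G F) with hch | hch
  · exact Or.inl ⟨F, subset_rfl, hFn, hch⟩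
  obtain ⟨A, hAF, hAne, hA2, hcut⟩ := exists_cut_of_cheeger_lt (by omega) hch
  have hA : A.Finite := hF.subset hAF
  have hcard : A.ncard + (F \ A).ncard = F.ncard := by
    rw [add_comm]; exact ncard_sdiff_add_ncard_of_subset hAF hF
  have hApos := (Set.ncard_pos hA).2 hAne
  have hI := inbd_finite (G := G) hA hF
  rcases ih A.ncard (by omega) hA hAne
      (((hbd.inter_of_left _).union hI).subset (ebd_subset_of_subset hAF)) rfl with
    ⟨F', hF'A, hF'⟩ | hA'
  · exact Or.inl ⟨F', hF'A.trans hAF, hF'⟩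
  rcases ih (F \ A).ncard (by omega) hF.sdiff (nonempty_of_ncard_ne_zero (by omega))
      ((hbd.sdiff.union (hI.image _)).subset ebd_sdiff_subset) rfl with
    ⟨F', hF'B, hF'⟩ | hB'
  · exact Or.inl ⟨F', hF'B.trans sdiff_subset, hF'⟩
  refine Or.inr ?_
  have hsplit : ((ebd G A).ncard : ℝ) + (ebd G (F \ A)).ncard
      ≤ (ebd G F).ncard + 2 * (inbd G F A).ncard := by
    exact_mod_cast ncard_ebd_add_ncard_ebd_sdiff_le hF hAF hbd
  have hclog : ((A.ncard * (Nat.clog 2 A.ncard + 1) + (F \ A).ncard * Nat.clog 2 (F \ A).ncard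
      : ℕ) : ℝ) ≤ (F.ncard * Nat.clog 2 F.ncard : ℕ) := by
    rw [← hcard]; exact_mod_cast mul_clog_two_add_le hApos (by omega)
  have hsum : (F.ncard : ℝ) = A.ncard + (F \ A).ncard := by exact_mod_cast hcard.symm
  push_cast at hclog
  rw [hsum] at hclog ⊢
  nlinarith [mul_le_mul_of_nonneg_left hclog (by positivity : (0 : ℝ) ≤ 2 * t)]

lemma le_sep_of_two_mul_ebd_le {lam : ℝ} {n : ℕ} (hn : 1 ≤ n) (hlam : 0 < lam)
    (hlow : ∀ P : Set V, P.Finite → P.Nonempty → P.ncard ≤ n → lam * P.ncard ≤ (ebd G P).ncard)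
    {F : Set V} (hF : F.Finite) (hne : F.Nonempty) (hbd : (ebd G F).Finite)
    (hsmall : 2 * ((ebd G F).ncard : ℝ) ≤ lam * F.ncard) :
    n * lam / (8 * Nat.clog 2 F.ncard) ≤ sep G F.ncard := by
  have hM : (0 : ℝ) < F.ncard := by exact_mod_cast (Set.ncard_pos hF).2 hne
  have hnF : n < F.ncard := by
    by_contra! h
    nlinarith [hlow F hF hne h]
  set L : ℝ := (Nat.clog 2 F.ncard : ℝ)
  have hL : 1 ≤ L := Nat.one_le_cast.2 (Nat.clog_pos one_lt_two (by omega))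
  rcases exists_subset_le_cheeger_or_le_ebd_add hn (by positivity : 0 ≤ lam / (8 * L)) hlow hF
      hne hbd with ⟨F', hF'F, hnF', hch⟩ | hbad
  · have hn' : (n : ℝ) ≤ F'.ncard := by exact_mod_cast hnF'.le
    calc n * lam / (8 * L) = n * (lam / (8 * L)) := mul_div_assoc _ _ _
      _ ≤ F'.ncard * cheeger G F' := mul_le_mul hn' hch (by positivity) (by positivity)
      _ ≤ sep G F.ncard := le_sep (hF.subset hF'F) (ncard_le_ncard hF'F hF)
  · have : 2 * (lam / (8 * L)) * F.ncard * L = lam * F.ncard / 4 := by field_simp; ring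
    nlinarith

end Bisection

section PowerLaw

lemma le_sep_of_optimal {C₁ C₂ α β : ℝ} (hC₁ : 0 < C₁) (hα : 0 < α)
    (hiso : ∀ n : ℕ, 1 ≤ n →
      C₁ / (n : ℝ) ^ α ≤ isop G n ∧ isop G n ≤ C₂ / (n : ℝ) ^ β)
    {F : Set V} (hF : Optimal G F) {n : ℕ} (hn : 1 ≤ n)
    (hnF : 2 * C₂ * (n : ℝ) ^ α ≤ C₁ * (F.ncard : ℝ) ^ β) :
    C₁ * (n : ℝ) ^ (1 - α) / (8 * Nat.clog 2 F.ncard) ≤ sep G F.ncard := by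
  have hM : (0 : ℝ) < F.ncard := by exact_mod_cast hF.ncard_pos
  have hnR : (0 : ℝ) < n := by exact_mod_cast hn
  have hisoF := hiso F.ncard hF.ncard_pos
  set lam := C₁ / (n : ℝ) ^ α
  have hlow : ∀ P : Set V, P.Finite → P.Nonempty → P.ncard ≤ n →
      lam * P.ncard ≤ (ebd G P).ncard := by
    intro P hP hne hPn
    have hPpos := (Set.ncard_pos hP).2 hne
    rw [← ratio_mul_ncard hP hne]
    gcongr
    calc lam ≤ C₁ / (P.ncard : ℝ) ^ α := div_le_div_of_nonneg_left hC₁.le (by positivity)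
          (rpow_le_rpow (by positivity) (by exact_mod_cast hPn) hα.le)
      _ ≤ isop G P.ncard := (hiso _ hPpos).1
      _ ≤ ratio G P := isop_le_ratio hP hne le_rfl
  have hratio : 2 * ratio G F ≤ lam := by
    rw [hF.2.2]
    calc 2 * isop G F.ncard ≤ 2 * (C₂ / (F.ncard : ℝ) ^ β) := by gcongr; exact hisoF.2
      _ ≤ lam := by
        rw [mul_div_assoc', div_le_div_iff₀ (by positivity) (by positivity)]
        linarith
  have hsmall : 2 * ((ebd G F).ncard : ℝ) ≤ lam * F.ncard := by
    rw [← ratio_mul_ncard hF.1 hF.2.1, ← mul_assoc]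
    gcongr
  have hbd : (ebd G F).Finite :=
    ebd_finite_of_ratio_pos (hF.2.2 ▸ (by positivity : 0 < C₁ / (F.ncard : ℝ) ^ α).trans_le hisoF.1)
  calc C₁ * (n : ℝ) ^ (1 - α) / (8 * Nat.clog 2 F.ncard)
      = n * lam / (8 * Nat.clog 2 F.ncard) := by rw [rpow_sub hnR, rpow_one]; ring
    _ ≤ sep G F.ncard := le_sep_of_two_mul_ebd_le hn (by positivity) hlow hF.1 hF.2.1 hbd hsmall

lemma clog_two_mul_log_two_le {M : ℕ} (hM : 2 ≤ M) :
    (Nat.clog 2 M : ℝ) * log 2 ≤ 2 * log M := by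
  have hpos := Nat.clog_pos one_lt_two hM
  have hlt : ((2 : ℝ) ^ (Nat.clog 2 M - 1)) < M := by
    exact_mod_cast Nat.pow_pred_clog_lt_self one_lt_two hM
  have h := log_lt_log (by positivity) hlt
  rw [log_pow, Nat.cast_sub hpos, Nat.cast_one] at h
  linarith [log_le_log two_pos (by exact_mod_cast hM : (2 : ℝ) ≤ M)]

/-- At the scale `n ≈ c M^(β/α)` the bound `Λ(n) ≥ C₁ n^(-α)` beats `Λ(M) ≤ C₂ M^(-β)` by a
factor two, so the bisection of an optimal set of size `M` must stop at pieces of size `> n`. -/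
lemma eventually_mul_rpow_div_log_le_sep {C₁ C₂ α β : ℝ} (hC₁ : 0 < C₁) (hC₂ : 0 < C₂)
    (hβ : 0 < β) (hα0 : 0 < α) (hα : α < 1)
    (hiso : ∀ n : ℕ, 1 ≤ n →
      C₁ / (n : ℝ) ^ α ≤ isop G n ∧ isop G n ≤ C₂ / (n : ℝ) ^ β) :
    ∃ A > (0 : ℝ), ∀ᶠ M : ℕ in atTop, ∀ F : Set V, Optimal G F → F.ncard = M →
      A * (M : ℝ) ^ (β * (1 - α) / α) / log M ≤ sep G M := by
  set c := (C₁ / (2 * C₂)) ^ (1 / α)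
  have hc : 0 < c := by positivity
  have hlog2 : 0 < log 2 := log_pos one_lt_two
  refine ⟨C₁ * (c / 2) ^ (1 - α) * log 2 / 16, by positivity, ?_⟩
  have htend : Tendsto (fun M : ℕ => c * (M : ℝ) ^ (β / α)) atTop atTop :=
    ((tendsto_rpow_atTop (div_pos hβ hα0)).comp tendsto_natCast_atTop_atTop).const_mul_atTop hc
  filter_upwards [eventually_ge_atTop 2, htend.eventually_ge_atTop 1] with M hM hx F hF hFM
  subst hFM
  set x := c * (F.ncard : ℝ) ^ (β / α)
  have hn : 1 ≤ ⌊x⌋₊ := (Nat.one_le_floor_iff _).2 hx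
  have hxα : x ^ α = C₁ / (2 * C₂) * (F.ncard : ℝ) ^ β := by
    rw [mul_rpow hc.le (by positivity), ← rpow_mul (by positivity), ← rpow_mul (by positivity),
      one_div_mul_cancel hα0.ne', div_mul_cancel₀ _ hα0.ne', rpow_one]
  have hsep := le_sep_of_optimal hC₁ hα0 hiso hF hn <|
    calc 2 * C₂ * (⌊x⌋₊ : ℝ) ^ α ≤ 2 * C₂ * x ^ α := by gcongr; exact Nat.floor_le (by positivity)
      _ = C₁ * (F.ncard : ℝ) ^ β := by rw [hxα]; field_simp
  have hpow : (c / 2) ^ (1 - α) * (F.ncard : ℝ) ^ (β * (1 - α) / α) ≤ (⌊x⌋₊ : ℝ) ^ (1 - α) :=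
    calc (c / 2) ^ (1 - α) * (F.ncard : ℝ) ^ (β * (1 - α) / α) = (x / 2) ^ (1 - α) := by
          rw [show x / 2 = c / 2 * (F.ncard : ℝ) ^ (β / α) by ring, mul_rpow (by positivity)
            (by positivity), ← rpow_mul (by positivity), div_mul_eq_mul_div]
      _ ≤ (⌊x⌋₊ : ℝ) ^ (1 - α) := by gcongr; exact (Nat.div_two_lt_floor hx).le
  have hclog := clog_two_mul_log_two_le hM
  have hlogM : 0 < log F.ncard := log_pos (by exact_mod_cast hM)
  calc C₁ * (c / 2) ^ (1 - α) * log 2 / 16 * (F.ncard : ℝ) ^ (β * (1 - α) / α) / log F.ncard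
      = C₁ * ((c / 2) ^ (1 - α) * (F.ncard : ℝ) ^ (β * (1 - α) / α))
        / (16 * log F.ncard / log 2) := by field_simp
    _ ≤ C₁ * (⌊x⌋₊ : ℝ) ^ (1 - α) / (8 * Nat.clog 2 F.ncard) := by
        gcongr
        · exact mul_pos (by norm_num) (Nat.cast_pos.2 (Nat.clog_pos one_lt_two hM))
        · rw [le_div_iff₀ hlog2]; linarith
    _ ≤ sep G F.ncard := hsep

lemma rpow_div_log_le_two_mul {γ x y : ℝ} (hγ0 : 0 ≤ γ) (hγ1 : γ ≤ 1) (hx : 2 ≤ x) (hxy : x ≤ y)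
    (hy : y ≤ 2 * x) : y ^ γ / log y ≤ 2 * (x ^ γ / log x) := by
  have hlogx : 0 < log x := log_pos (by linarith)
  calc y ^ γ / log y ≤ (2 * x) ^ γ / log x :=
        div_le_div₀ (by positivity) (rpow_le_rpow (by linarith) hy hγ0) hlogx
          (log_le_log (by linarith) hxy)
    _ = 2 ^ γ * (x ^ γ / log x) := by rw [mul_rpow zero_le_two (by linarith), mul_div_assoc]
    _ ≤ 2 * (x ^ γ / log x) := by
        gcongr
        simpa using rpow_le_rpow_of_exponent_le one_le_two hγ1

lemma exists_pos_mul_rpow_div_log_le {f : ℕ → ℝ} {γ c A₁ : ℝ} (hγ : 0 ≤ γ) (hc : 0 < c)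
    (hA₁ : 0 < A₁) (hsmall : ∀ k, 2 ≤ k → c ≤ f k)
    (hlarge : ∀ᶠ k : ℕ in atTop, A₁ * (k : ℝ) ^ γ / log k ≤ f k) :
    ∃ A > (0 : ℝ), ∀ k : ℕ, 2 ≤ k → A * (k : ℝ) ^ γ / log k ≤ f k := by
  obtain ⟨K, hK⟩ := eventually_atTop.1 hlarge
  have hlog2 : 0 < log 2 := log_pos one_lt_two
  refine ⟨min A₁ (c * log 2 / ((K : ℝ) + 1) ^ γ), lt_min hA₁ (by positivity), fun k hk => ?_⟩
  have hlogk : log 2 ≤ log k := log_le_log two_pos (by exact_mod_cast hk)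
  rcases le_or_gt K k with hKk | hkK
  · refine le_trans ?_ (hK k hKk)
    gcongr
    exact min_le_left _ _
  · calc min A₁ (c * log 2 / ((K : ℝ) + 1) ^ γ) * (k : ℝ) ^ γ / log k
        ≤ c * log 2 / ((K : ℝ) + 1) ^ γ * ((K : ℝ) + 1) ^ γ / log 2 := by
          gcongr
          · exact min_le_right _ _
          · exact_mod_cast hkK.le.trans (Nat.le_succ K)
      _ = c := by field_simp
      _ ≤ f k := hsmall k hk

end PowerLaw

end SepProfile

theorem stmt10_general {V : Type*} (G : SimpleGraph V)
    (hPSI : HasPSI G)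
    (C₁ C₂ α β : ℝ) (hC₁ : 0 < C₁) (hC₂ : 0 < C₂)
    (hβ : 0 < β) (hβα : β < α) (hα : α < 1)
    (hiso : ∀ n : ℕ, 1 ≤ n →
      C₁ / (n : ℝ) ^ α ≤ isop G n ∧ isop G n ≤ C₂ / (n : ℝ) ^ β) :
    ∃ A > (0:ℝ), ∀ n : ℕ, 2 ≤ n →
      A * (n : ℝ) ^ (β * (1 - α) / α) / Real.log n ≤ sep G n := by
  have hα0 : 0 < α := hβ.trans hβα
  have hγ0 : 0 ≤ β * (1 - α) / α := div_nonneg (mul_nonneg hβ.le (by linarith)) hα0.le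
  have hγ1 : β * (1 - α) / α ≤ 1 := (div_le_one hα0).2 (by nlinarith)
  have hpos : ∀ m, 1 ≤ m → 0 < isop G m := fun m hm =>
    (div_pos hC₁ (rpow_pos_of_pos (by exact_mod_cast hm) α)).trans_le (hiso m hm).1
  obtain ⟨v, w, hadj⟩ := exists_adj_of_isop_pos (hpos 1 le_rfl)
  obtain ⟨A₁, hA₁, hlarge⟩ := eventually_mul_rpow_div_log_le_sep hC₁ hC₂ hβ hα0 hα hiso
  obtain ⟨K, hK⟩ := eventually_atTop.1 hlarge
  refine exists_pos_mul_rpow_div_log_le hγ0 two_pos (half_pos hA₁) (fun k hk => two_le_sep hadj hk)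
    (eventually_atTop.2 ⟨2 * K + 4, fun k hk => ?_⟩)
  obtain ⟨F, hF, hsF, hFs⟩ := exists_optimal_ncard_mem_Ico hPSI hpos (s := (k + 1) / 2) (by omega)
  have hMk : F.ncard ≤ k := by omega
  calc A₁ / 2 * (k : ℝ) ^ (β * (1 - α) / α) / log k
      = A₁ / 2 * ((k : ℝ) ^ (β * (1 - α) / α) / log k) := mul_div_assoc _ _ _
    _ ≤ A₁ / 2 * (2 * ((F.ncard : ℝ) ^ (β * (1 - α) / α) / log F.ncard)) := by
        gcongr
        exact rpow_div_log_le_two_mul hγ0 hγ1 (by exact_mod_cast (show 2 ≤ F.ncard by omega))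
          (by exact_mod_cast hMk) (by exact_mod_cast (show k ≤ 2 * F.ncard by omega))
    _ = A₁ * (F.ncard : ℝ) ^ (β * (1 - α) / α) / log F.ncard := by ring
    _ ≤ sep G F.ncard := hK _ (by omega) F hF rfl
    _ ≤ sep G k := sep_mono hMk

theorem stmt10 {V : Type*} (G : SimpleGraph V) (D : ℕ) (hdeg : DegLE G D)
    (hPSI : HasPSI G)
    (C₁ C₂ α β : ℝ) (hC₁ : 0 < C₁) (hC₂ : 0 < C₂)
    (hβ : 0 < β) (hβα : β < α) (hα : α < 1)
    (hiso : ∀ n : ℕ, 1 ≤ n →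
      C₁ / (n : ℝ) ^ α ≤ isop G n ∧ isop G n ≤ C₂ / (n : ℝ) ^ β) :
    ∃ A > (0:ℝ), ∀ n : ℕ, 2 ≤ n →
      A * (n : ℝ) ^ (β * (1 - α) / α) / Real.log n ≤ sep G n :=
  stmt10_general G hPSI C₁ C₂ α β hC₁ hC₂ hβ hβα hα hiso
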